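/- Let p > q be odd primes and let G be a finite group. If G embeds transitively in Hol(C_p × D_q) or G embeds transitively in Hol(C_q × D_p), then G also embeds transitively in Hol(D_{pq}), where C_p × D_q = Multiplicative (ZMod p) × DihedralGroup q, C_q × D_p = Multiplicative (ZMod q) × DihedralGroup p, and D_{pq} = DihedralGroup (p*q). -/

import Mathlib

/-- The left regular representation of a group `N` in `Equiv.Perm N`. -/
def leftReg (N : Type*) [Group N] : N →* Equiv.Perm N :=
  MulAction.toPermHom N N

/-- The holomorph of `N`: the normalizer of the image of the left regular
representation inside `Equiv.Perm N`. -/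
def Hol (N : Type*) [Group N] : Subgroup (Equiv.Perm N) :=
  Subgroup.normalizer ((leftReg N).range : Set (Equiv.Perm N))

/-- A subgroup of `Equiv.Perm N` is transitive on `N`. -/
def IsTransitiveSubgroup {N : Type*} [Group N] (M : Subgroup (Equiv.Perm N)) : Prop :=
  ∀ a b : N, ∃ g ∈ M, g a = b

/-- A group `G` embeds transitively in `Hol(N)` if there is an injective
homomorphism `G →* Equiv.Perm N` whose range lies in `Hol(N)` and is
transitive on `N`. -/
def EmbedsTransitively (G : Type*) [Group G] (N : Type*) [Group N] : Prop :=
  ∃ φ : G →* Equiv.Perm N, Function.Injective φ ∧ φ.range ≤ Hol N ∧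
    IsTransitiveSubgroup φ.range

/-!
Identify `ZMod p × ZMod q` with `ZMod (pq)`. Then `C_p × D_q` and `D_{pq}` are both
`ZMod (pq) ⋊ C₂` on the same underlying set, the reflections acting by `(1, -1)` and by
`(-1, -1)`; call the resulting bijection `β`. Elements of a holomorph are the maps
`x ↦ F x * g` with `F` an automorphism. As `p`, `q`, `2` are pairwise coprime, an automorphism
of `C_p × D_q` only scales the two coordinates and shifts the reflections, and after
conjugation by `β` such a map `x ↦ F x * g` is again of the form `x ↦ F' x * g'` on `D_{pq}`.
So conjugation by `β` turns a transitive embedding into `Hol(C_p × D_q)` into one into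
`Hol(D_{pq})`.
-/

section Holomorph

open Equiv

variable {N : Type*} [Group N]

lemma leftReg_apply (n x : N) : leftReg N n x = n * x := rfl

lemma leftReg_injective : Function.Injective (leftReg N) := fun a b h => by
  simpa [leftReg_apply] using congrArg (· 1) h

theorem mem_Hol_iff (π : Perm N) : π ∈ Hol N ↔ ∃ f : N →* N, ∀ x, π x = f x * π 1 := by
  constructor
  · intro hπ
    have hconj : ∀ n, ∃ m, leftReg N m = π * leftReg N n * π⁻¹ := fun n =>
      (Subgroup.mem_set_normalizer_iff.mp hπ (leftReg N n)).mp ⟨n, rfl⟩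
    choose f hf using hconj
    have hf_apply : ∀ n, f n = π n * (π 1)⁻¹ := fun n => by
      simpa [leftReg_apply, eq_mul_inv_iff_mul_eq] using congrArg (· (π 1)) (hf n)
    refine ⟨MonoidHom.mk' f fun a b => leftReg_injective ?_, fun x => by simp [hf_apply]⟩
    rw [map_mul, hf, hf, hf, map_mul]
    group
  · rintro ⟨f, hf⟩
    have hconj : ∀ n, π * leftReg N n * π⁻¹ = leftReg N (f n) := fun n => by
      ext y
      rw [Perm.mul_apply, Perm.mul_apply, leftReg_apply, leftReg_apply, hf, map_mul, mul_assoc,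
        ← hf, Perm.coe_inv, apply_symm_apply]
    have hsurj : Function.Surjective f := fun m =>
      ⟨π⁻¹ (m * π 1), by rw [← mul_left_inj (π 1), ← hf, Perm.coe_inv, apply_symm_apply]⟩
    refine Subgroup.mem_set_normalizer_iff.mpr fun h => ⟨?_, ?_⟩
    · rintro ⟨n, rfl⟩
      exact ⟨f n, (hconj n).symm⟩
    · rintro ⟨m, hm⟩
      obtain ⟨n, rfl⟩ := hsurj m
      exact ⟨n, mul_left_cancel (mul_right_cancel ((hconj n).trans hm))⟩

lemma EmbedsTransitively.of_permCongr {G N' : Type*} [Group G] [Group N']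
    (e : N ≃ N') (he : ∀ π ∈ Hol N, e.permCongr π ∈ Hol N') (h : EmbedsTransitively G N) :
    EmbedsTransitively G N' := by
  obtain ⟨φ, hinj, hHol, htrans⟩ := h
  refine ⟨e.permCongrHom.toMonoidHom.comp φ, e.permCongrHom.injective.comp hinj, ?_,
    fun a b => ?_⟩
  · rintro _ ⟨g, rfl⟩
    exact he _ (hHol ⟨g, rfl⟩)
  · obtain ⟨_, ⟨g, rfl⟩, hg⟩ := htrans (e.symm a) (e.symm b)
    exact ⟨_, ⟨g, rfl⟩, by simp [Equiv.permCongrHom_coe, hg]⟩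

end Holomorph

lemma eq_one_of_pow_eq_one_of_coprime {K : Type*} [Group K] {n : ℕ}
    (hn : n.Coprime (Nat.card K)) {y : K} (hy : y ^ n = 1) : y = 1 :=
  orderOf_eq_one_iff.mp <|
    Nat.eq_one_of_dvd_coprimes hn (orderOf_dvd_of_pow_eq_one hy) (orderOf_dvd_natCard y)

namespace DihedralGroup

variable {n : ℕ}

def affineHom (κ k : ZMod n) : DihedralGroup n →* DihedralGroup n where
  toFun
    | r i => r (κ * i)
    | sr i => sr (κ * i + k)
  map_one' := by rw [one_def]; simp
  map_mul' := by
    rintro (i | i) (j | j) <;> simp only [r_mul_r, r_mul_sr, sr_mul_r, sr_mul_sr] <;> congr 1 <;>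
      ring

@[simp]
lemma affineHom_r (κ k i : ZMod n) : affineHom κ k (r i) = r (κ * i) := rfl

@[simp]
lemma affineHom_sr (κ k i : ZMod n) : affineHom κ k (sr i) = sr (κ * i + k) := rfl

lemma exists_eq_r_of_pow_eq_one {m : ℕ} (hm : Odd m) {x : DihedralGroup n} (hx : x ^ m = 1) :
    ∃ i, x = r i := by
  rcases x with i | i
  · exact ⟨i, rfl⟩
  · have h2 : 2 ∣ m := orderOf_sr (n := n) i ▸ orderOf_dvd_of_pow_eq_one hx
    exact absurd (even_iff_two_dvd.mpr h2) (Nat.not_even_iff_odd.mpr hm)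

lemma exists_eq_sr_of_sq_eq_one (hn : Odd n) {x : DihedralGroup n} (hx : x ^ 2 = 1)
    (hx1 : x ≠ 1) : ∃ i, x = sr i := by
  rcases x with i | i
  · have hpow_n : r i ^ n = 1 := by simp [r_pow]
    refine absurd (orderOf_eq_one_iff.mp ?_) hx1
    exact Nat.eq_one_of_dvd_coprimes (Nat.coprime_two_left.mpr hn)
      (orderOf_dvd_of_pow_eq_one hx) (orderOf_dvd_of_pow_eq_one hpow_n)
  · exact ⟨i, rfl⟩

end DihedralGroup

open DihedralGroup Multiplicative

section CyclicProdDihedral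

variable {p q : ℕ}

lemma cyclicProdDihedral_exists_generator_images_of_injective (hp : Odd p) (hq : Odd q)
    (hpq : p.Coprime q)
    {F : Multiplicative (ZMod p) × DihedralGroup q →* Multiplicative (ZMod p) × DihedralGroup q}
    (hF : Function.Injective F) :
    ∃ μ ν b₀, F (ofAdd 1, 1) = (ofAdd μ, 1) ∧ F (1, r 1) = (1, r ν) ∧
      F (1, sr 0) = (1, sr b₀) := by
  have hcard : Nat.card (Multiplicative (ZMod p)) = p := by
    rw [Nat.card_congr toAdd, Nat.card_zmod]
  have hfst : ∀ {m} x, m.Coprime p → F x ^ m = 1 → (F x).1 = 1 := fun x hm hx =>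
    eq_one_of_pow_eq_one_of_coprime (by rwa [hcard]) (congrArg Prod.fst hx)
  have hpow_p : F (ofAdd 1, 1) ^ p = 1 := by
    rw [← map_pow, Prod.pow_mk, one_pow, ← ofAdd_nsmul, nsmul_one, ZMod.natCast_self]
    exact map_one F
  have hpow_q : F (1, r 1) ^ q = 1 := by
    rw [← map_pow, Prod.pow_mk, one_pow, r_one_pow_n]
    exact map_one F
  have hpow_two : F (1, sr 0) ^ 2 = 1 := by
    rw [← map_pow, Prod.pow_mk, one_pow, sq, sr_mul_self]
    exact map_one F
  have hsnd_p : (F (ofAdd 1, 1)).2 = 1 := by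
    refine eq_one_of_pow_eq_one_of_coprime ?_ (congrArg Prod.snd hpow_p)
    rw [nat_card]
    exact (Nat.coprime_two_right.mpr hp).mul_right hpq
  obtain ⟨ν, hν⟩ := exists_eq_r_of_pow_eq_one hq (congrArg Prod.snd hpow_q)
  have hfst_two := hfst _ (Nat.coprime_two_left.mpr hp) hpow_two
  have hsnd_two : (F (1, sr 0)).2 ≠ 1 := fun h => by
    cases congrArg Prod.snd (hF ((Prod.ext hfst_two h).trans (map_one F).symm))
  obtain ⟨b₀, hb₀⟩ := exists_eq_sr_of_sq_eq_one hq (congrArg Prod.snd hpow_two) hsnd_two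
  exact ⟨toAdd (F (ofAdd 1, 1)).1, ν, b₀, Prod.ext rfl hsnd_p,
    Prod.ext (hfst _ hpq.symm hpow_q) hν, Prod.ext hfst_two hb₀⟩

lemma cyclicProdDihedral_apply_of_generator_images [NeZero p] [NeZero q]
    {F : Multiplicative (ZMod p) × DihedralGroup q →* Multiplicative (ZMod p) × DihedralGroup q}
    {μ : ZMod p} {ν b₀ : ZMod q} (hμ : F (ofAdd 1, 1) = (ofAdd μ, 1))
    (hν : F (1, r 1) = (1, r ν)) (hb₀ : F (1, sr 0) = (1, sr b₀)) (a : ZMod p) (b : ZMod q) :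
    F (ofAdd a, r b) = (ofAdd (μ * a), r (ν * b)) ∧
      F (ofAdd a, sr b) = (ofAdd (μ * a), sr (ν * b + b₀)) := by
  have hfst : F (ofAdd a, 1) = (ofAdd (μ * a), 1) := by
    have : ((ofAdd a, 1) : Multiplicative (ZMod p) × DihedralGroup q) = (ofAdd 1, 1) ^ a.val := by
      rw [Prod.pow_mk, ← ofAdd_nsmul, nsmul_one, ZMod.natCast_zmod_val, one_pow]
    rw [this, map_pow, hμ, Prod.pow_mk, ← ofAdd_nsmul, one_pow, nsmul_eq_mul,
      ZMod.natCast_zmod_val, mul_comm]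
  have hsnd : ∀ b : ZMod q, F (1, r b) = (1, r (ν * b)) := fun b => by
    have : ((1, r b) : Multiplicative (ZMod p) × DihedralGroup q) = (1, r 1) ^ b.val := by
      rw [Prod.pow_mk, r_one_pow, ZMod.natCast_zmod_val, one_pow]
    rw [this, map_pow, hν, Prod.pow_mk, r_pow, one_pow, ZMod.natCast_zmod_val]
  have hr : ∀ b, F (ofAdd a, r b) = (ofAdd (μ * a), r (ν * b)) := fun b => by
    rw [← mul_one (ofAdd a), ← one_mul (r b), ← Prod.mk_mul_mk, map_mul, hfst, hsnd,
      Prod.mk_mul_mk, mul_one, one_mul]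
  refine ⟨hr b, ?_⟩
  have hsr : ((ofAdd a, sr b) : Multiplicative (ZMod p) × DihedralGroup q) =
      (ofAdd a, r (-b)) * (1, sr 0) := by
    rw [Prod.mk_mul_mk, mul_one, r_mul_sr, zero_sub, neg_neg]
  rw [hsr, map_mul, hr, hb₀, Prod.mk_mul_mk, mul_one, r_mul_sr]
  congr 2
  ring

variable (p q) in
/-- The Chinese remainder bijection on rotations and on reflections; not a group isomorphism. -/
def cyclicProdDihedralEquiv (hpq : p.Coprime q) :
    Multiplicative (ZMod p) × DihedralGroup q ≃ DihedralGroup (p * q) where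
  toFun
    | (a, r b) => r ((ZMod.chineseRemainder hpq).symm (toAdd a, b))
    | (a, sr b) => sr ((ZMod.chineseRemainder hpq).symm (toAdd a, b))
  invFun
    | r i => (ofAdd (ZMod.chineseRemainder hpq i).1, r (ZMod.chineseRemainder hpq i).2)
    | sr i => (ofAdd (ZMod.chineseRemainder hpq i).1, sr (ZMod.chineseRemainder hpq i).2)
  left_inv := by rintro ⟨a, b | b⟩ <;> simp
  right_inv := by rintro (i | i) <;> simp

variable (hpq : p.Coprime q)

@[simp]
lemma cyclicProdDihedralEquiv_apply_r (a : ZMod p) (b : ZMod q) :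
    cyclicProdDihedralEquiv p q hpq (ofAdd a, r b) =
      r ((ZMod.chineseRemainder hpq).symm (a, b)) :=
  rfl

@[simp]
lemma cyclicProdDihedralEquiv_apply_sr (a : ZMod p) (b : ZMod q) :
    cyclicProdDihedralEquiv p q hpq (ofAdd a, sr b) =
      sr ((ZMod.chineseRemainder hpq).symm (a, b)) :=
  rfl

@[simp]
lemma cyclicProdDihedralEquiv_symm_r (a : ZMod p) (b : ZMod q) :
    (cyclicProdDihedralEquiv p q hpq).symm (r ((ZMod.chineseRemainder hpq).symm (a, b))) =
      (ofAdd a, r b) := by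
  simp [cyclicProdDihedralEquiv]

@[simp]
lemma cyclicProdDihedralEquiv_symm_sr (a : ZMod p) (b : ZMod q) :
    (cyclicProdDihedralEquiv p q hpq).symm (sr ((ZMod.chineseRemainder hpq).symm (a, b))) =
      (ofAdd a, sr b) := by
  simp [cyclicProdDihedralEquiv]

lemma cyclicProdDihedralEquiv_symm_one : (cyclicProdDihedralEquiv p q hpq).symm 1 = 1 := by
  change (ofAdd (ZMod.chineseRemainder hpq 0).1, r (ZMod.chineseRemainder hpq 0).2) = 1
  simp

lemma permCongr_cyclicProdDihedralEquiv_mem_Hol (hp : Odd p) (hq : Odd q)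
    {π : Equiv.Perm (Multiplicative (ZMod p) × DihedralGroup q)}
    (hπ : π ∈ Hol (Multiplicative (ZMod p) × DihedralGroup q)) :
    (cyclicProdDihedralEquiv p q hpq).permCongr π ∈ Hol (DihedralGroup (p * q)) := by
  have : NeZero p := ⟨hp.pos.ne'⟩
  have : NeZero q := ⟨hq.pos.ne'⟩
  obtain ⟨F, hF⟩ := (mem_Hol_iff π).mp hπ
  have hF_inj : Function.Injective F := fun x y hxy => π.injective (by rw [hF x, hF y, hxy])
  obtain ⟨μ, ν, b₀, hμ, hν, hb₀⟩ :=
    cyclicProdDihedral_exists_generator_images_of_injective hp hq hpq hF_inj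
  have hFab := cyclicProdDihedral_apply_of_generator_images hμ hν hb₀
  rw [mem_Hol_iff]
  rcases hπ1 : π 1 with ⟨a₁, b₁ | b₁⟩ <;> obtain ⟨c₁, rfl⟩ := ofAdd.surjective a₁
  -- Right translation by a reflection of `C_p × D_q` does not invert the `C_p`-coordinate,
  -- whereas in `D_{pq}` it inverts the whole rotation; the scale `-μ` compensates.
  on_goal 1 => refine ⟨affineHom ((ZMod.chineseRemainder hpq).symm (μ, ν))
    ((ZMod.chineseRemainder hpq).symm (0, b₀)), ?_⟩
  on_goal 2 => refine ⟨affineHom ((ZMod.chineseRemainder hpq).symm (-μ, ν))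
    ((ZMod.chineseRemainder hpq).symm (0, b₀)), ?_⟩
  all_goals
    rintro (i | i) <;> obtain ⟨⟨a, b⟩, rfl⟩ := (ZMod.chineseRemainder hpq).symm.surjective i <;>
      simp only [Equiv.permCongr_apply, cyclicProdDihedralEquiv_symm_one,
        cyclicProdDihedralEquiv_symm_r, cyclicProdDihedralEquiv_symm_sr, affineHom_r,
        affineHom_sr, hF (ofAdd a, _), hFab, hπ1, Prod.mk_mul_mk, ← ofAdd_add, r_mul_r,
        r_mul_sr, sr_mul_r, sr_mul_sr, cyclicProdDihedralEquiv_apply_r, cyclicProdDihedralEquiv_apply_sr,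
        ← map_mul, ← map_add, ← map_sub, Prod.mk_add_mk, Prod.mk_sub_mk] <;>
      exact congrArg _ (congrArg _ (Prod.ext (by ring) (by ring)))

end CyclicProdDihedral

theorem EmbedsTransitively.dihedral_of_cyclic_prod_dihedral {p q : ℕ} (hpq : p.Coprime q)
    (hp : Odd p) (hq : Odd q) {G : Type*} [Group G]
    (hG : EmbedsTransitively G (Multiplicative (ZMod p) × DihedralGroup q)) :
    EmbedsTransitively G (DihedralGroup (p * q)) :=
  hG.of_permCongr _ fun _ => permCongr_cyclicProdDihedralEquiv_mem_Hol hpq hp hq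

theorem embeds_mixed_implies_embeds_dihedral_general (p q : ℕ) (hp : p.Prime) (hq : q.Prime)
    (hpodd : Odd p) (hqodd : Odd q) (hlt : q < p)
    (G : Type*) [Group G]
    (h : EmbedsTransitively G (Multiplicative (ZMod p) × DihedralGroup q) ∨
         EmbedsTransitively G (Multiplicative (ZMod q) × DihedralGroup p)) :
    EmbedsTransitively G (DihedralGroup (p * q)) := by
  have hpq : p.Coprime q := (Nat.coprime_primes hp hq).mpr hlt.ne'
  rcases h with h | h
  · exact h.dihedral_of_cyclic_prod_dihedral hpq hpodd hqodd
  · rw [mul_comm]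
    exact h.dihedral_of_cyclic_prod_dihedral hpq.symm hqodd hpodd

theorem embeds_mixed_implies_embeds_dihedral (p q : ℕ) (hp : p.Prime) (hq : q.Prime)
    (hpodd : Odd p) (hqodd : Odd q) (hlt : q < p)
    (G : Type*) [Group G] [Finite G]
    (h : EmbedsTransitively G (Multiplicative (ZMod p) × DihedralGroup q) ∨
         EmbedsTransitively G (Multiplicative (ZMod q) × DihedralGroup p)) :
    EmbedsTransitively G (DihedralGroup (p * q)) :=
  embeds_mixed_implies_embeds_dihedral_general p q hp hq hpodd hqodd hlt G h
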